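/- Let Υ_k = {Ω ∈ 𝒫_k : Ω((z+1)/(−2z−1))·(−2z−1)^k + Ω(z) = 0}, where 𝒫_k is the space of complex polynomials of degree ≤ k and k ≥ 2 is even. Then dim Υ_k = 2⌊(k−1)/4⌋ + 2. -/

import Mathlib

open Polynomial

/-- The space `Υ_k` of complex polynomials `Ω` of degree `≤ k` satisfying
`Ω((z+1)/(−2z−1))·(−2z−1)^k + Ω(z) = 0` (as an identity of rational functions,
i.e. for all `z ≠ −1/2`). -/
noncomputable def Upsilon (k : ℕ) : Submodule ℂ ℂ[X] where
  carrier := {Ω | Ω ∈ Polynomial.degreeLT ℂ (k + 1) ∧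
    ∀ z : ℂ, z ≠ -1/2 →
      Ω.eval ((z + 1) / (-2 * z - 1)) * (-2 * z - 1) ^ k + Ω.eval z = 0}
  zero_mem' := by
    refine ⟨Submodule.zero_mem _, ?_⟩
    intro z hz; simp
  add_mem' := by
    rintro p q ⟨hp, hp'⟩ ⟨hq, hq'⟩
    refine ⟨Submodule.add_mem _ hp hq, ?_⟩
    intro z hz
    simp only [eval_add]
    linear_combination hp' z hz + hq' z hz
  smul_mem' := by
    rintro c p ⟨hp, hp'⟩
    refine ⟨Submodule.smul_mem _ _ hp, ?_⟩
    intro z hz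
    simp only [eval_smul, smul_eq_mul]
    linear_combination c * hp' z hz

namespace UpsilonAux

/-- The eigen-polynomials. -/
noncomputable def vE (k j : ℕ) : ℂ[X] :=
  (X - C ((-1 + Complex.I)/2)) ^ j * (X - C ((-1 - Complex.I)/2)) ^ (k - j)

/-- The eigenvalues. -/
noncomputable def muE (k j : ℕ) : ℂ := Complex.I ^ j * (-Complex.I) ^ (k - j)

lemma vE_mem_degreeLT (k j : ℕ) (hj : j ≤ k) : vE k j ∈ degreeLT ℂ (k + 1) := by
  have h1 : (vE k j).natDegree = j + (k - j) := by
    rw [vE, Polynomial.Monic.natDegree_mul ((monic_X_sub_C _).pow j)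
      ((monic_X_sub_C _).pow (k - j)), natDegree_pow, natDegree_pow,
      natDegree_X_sub_C]
    simp
  rw [mem_degreeLT]
  apply lt_of_le_of_lt (degree_le_natDegree)
  rw [h1, Nat.add_sub_cancel' hj]
  exact_mod_cast Nat.lt_succ_self k

lemma eval_vE (k j : ℕ) (hj : j ≤ k) (z : ℂ) (hz : z ≠ -1/2) :
    (vE k j).eval ((z + 1) / (-2 * z - 1)) * (-2 * z - 1) ^ k
      = muE k j * (vE k j).eval z := by
  have hd : (-2 * z - 1 : ℂ) ≠ 0 := by
    intro h; apply hz; linear_combination (-1/2 : ℂ) * h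
  set w := (z + 1) / (-2 * z - 1) with hw
  clear_value w
  have hwd : w * (-2 * z - 1) = z + 1 := by rw [hw]; exact div_mul_cancel₀ _ hd
  have h1 : (w - (-1 + Complex.I)/2) * (-2 * z - 1)
      = Complex.I * (z - (-1 + Complex.I)/2) := by
    linear_combination hwd + (1/2 : ℂ) * Complex.I_sq
  have h2 : (w - (-1 - Complex.I)/2) * (-2 * z - 1)
      = (-Complex.I) * (z - (-1 - Complex.I)/2) := by
    linear_combination hwd + (1/2 : ℂ) * Complex.I_sq
  have hk' : (-2*z-1 : ℂ)^k = (-2*z-1)^j * (-2*z-1)^(k-j) := by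
    rw [← pow_add, Nat.add_sub_cancel' hj]
  simp only [vE, muE, eval_mul, eval_pow, eval_sub, eval_X, eval_C]
  rw [hk']
  calc (w - (-1 + Complex.I)/2)^j * (w - (-1-Complex.I)/2)^(k-j)
        * ((-2*z-1)^j * (-2*z-1)^(k-j))
      = ((w - (-1 + Complex.I)/2)^j * (-2*z-1)^j)
        * ((w - (-1-Complex.I)/2)^(k-j) * (-2*z-1)^(k-j)) := by ring
    _ = ((w - (-1 + Complex.I)/2) * (-2*z-1))^j
        * ((w - (-1-Complex.I)/2) * (-2*z-1))^(k-j) := by rw [mul_pow, mul_pow]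
    _ = (Complex.I * (z - (-1 + Complex.I)/2))^j
        * ((-Complex.I) * (z - (-1-Complex.I)/2))^(k-j) := by rw [h1, h2]
    _ = (Complex.I^j * (z - (-1 + Complex.I)/2)^j)
        * ((-Complex.I)^(k-j) * (z - (-1-Complex.I)/2)^(k-j)) := by rw [mul_pow, mul_pow]
    _ = _ := by ring

lemma indep_aux (k : ℕ) (c : ℂ) (hc : c ≠ 0) :
    LinearIndependent ℂ (fun j : Fin (k+1) => (X + C c) ^ (k - (j:ℕ)) * X ^ (j:ℕ)) := by
  rw [linearIndependent_iff']
  intro s g hg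
  suffices H : ∀ n : ℕ, ∀ j ∈ s, (j : ℕ) = n → g j = 0 by
    intro j hj; exact H j j hj rfl
  intro n
  induction n using Nat.strong_induction_on with
  | _ n IH =>
    intro j hj hjn
    have h0 : (∑ i ∈ s, g i • ((X + C c) ^ (k - (i:ℕ)) * X ^ (i:ℕ))).coeff n = 0 := by
      rw [hg]; simp
    rw [finset_sum_coeff] at h0
    simp only [coeff_smul, smul_eq_mul] at h0
    rw [Finset.sum_eq_single j] at h0
    · rw [coeff_mul_X_pow', hjn, if_pos le_rfl, Nat.sub_self,
        coeff_zero_eq_eval_zero] at h0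
      simp only [eval_pow, eval_add, eval_X, eval_C, zero_add] at h0
      exact (mul_eq_zero.mp h0).resolve_right (pow_ne_zero _ hc)
    · intro i hi hij
      rcases lt_trichotomy (i : ℕ) n with h | h | h
      · rw [IH _ h i hi rfl, zero_mul]
      · exact absurd (Fin.ext (h.trans hjn.symm)) hij
      · rw [coeff_mul_X_pow', if_neg (by omega), mul_zero]
    · intro h; exact absurd hj h

lemma indep_vE (k : ℕ) : LinearIndependent ℂ (fun j : Fin (k+1) => vE k (j:ℕ)) := by
  have key : ∀ j : Fin (k+1), (taylor ((-1+Complex.I)/2)) (vE k (j:ℕ))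
      = (X + C Complex.I) ^ (k - (j:ℕ)) * X ^ (j:ℕ) := by
    intro j
    rw [vE, taylor_apply, mul_comp, pow_comp, pow_comp, sub_comp, sub_comp,
      X_comp, C_comp, C_comp, add_sub_cancel_right, mul_comm]
    congr 2
    rw [add_sub_assoc, ← C_sub]
    congr 1
    rw [show ((-1 + Complex.I)/2 - (-1 - Complex.I)/2 : ℂ) = Complex.I by ring]
  refine LinearIndependent.of_comp (taylor ((-1+Complex.I)/2) : ℂ[X] →ₗ[ℂ] ℂ[X]) ?_
  have : ((taylor ((-1+Complex.I)/2) : ℂ[X] →ₗ[ℂ] ℂ[X]) ∘ fun j : Fin (k+1) => vE k (j:ℕ))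
      = fun j : Fin (k+1) => (X + C Complex.I) ^ (k - (j:ℕ)) * X ^ (j:ℕ) :=
    funext fun j => key j
  rw [this]
  exact indep_aux k Complex.I Complex.I_ne_zero

instance fd_degreeLT (n : ℕ) : FiniteDimensional ℂ (degreeLT ℂ n) :=
  (degreeLTEquiv ℂ n).symm.finiteDimensional

lemma finrank_degreeLT (n : ℕ) : Module.finrank ℂ (degreeLT ℂ n) = n := by
  rw [(degreeLTEquiv ℂ n).finrank_eq, Module.finrank_fin_fun]

lemma span_vE (k : ℕ) :
    Submodule.span ℂ (Set.range fun j : Fin (k+1) => vE k (j:ℕ)) = degreeLT ℂ (k+1) := by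
  refine Submodule.eq_of_le_of_finrank_le ?_ ?_
  · rw [Submodule.span_le]
    rintro _ ⟨j, rfl⟩
    exact vE_mem_degreeLT k j (Fin.is_le j)
  · rw [finrank_span_eq_card (indep_vE k), Fintype.card_fin, finrank_degreeLT]

lemma count_aux (mm n : ℕ) :
    (((Finset.range n).filter fun j => ¬ j % 2 = mm % 2)).card
      = (if mm % 2 = 0 then n / 2 else (n+1)/2) := by
  induction n with
  | zero => simp
  | succ n ih =>
    rw [Finset.range_add_one, Finset.filter_insert]
    by_cases h : ¬ n % 2 = mm % 2
    · rw [if_pos h, Finset.card_insert_of_notMem (by simp), ih]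
      split_ifs <;> omega
    · rw [if_neg h, ih]
      split_ifs <;> omega

end UpsilonAux



lemma mem_Upsilon_iff {k : ℕ} {Ω : ℂ[X]} : Ω ∈ Upsilon k ↔
    Ω ∈ Polynomial.degreeLT ℂ (k + 1) ∧
    ∀ z : ℂ, z ≠ -1/2 →
      Ω.eval ((z + 1) / (-2 * z - 1)) * (-2 * z - 1) ^ k + Ω.eval z = 0 := Iff.rfl

open UpsilonAux in
/-- `dim Υ_k = 2⌊(k−1)/4⌋ + 2` for `k ≥ 2` even. -/
theorem finrank_Upsilon (k : ℕ) (hk : Even k) (hk2 : 2 ≤ k) :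
    Module.finrank ℂ (Upsilon k) = 2 * ((k - 1) / 4) + 2 := by
  classical
  obtain ⟨m, hm⟩ := hk
  have hmu : ∀ j : ℕ, j ≤ k → muE k j = (-1 : ℂ) ^ (j + m) := by
    intro j hj
    have e1 : (-Complex.I : ℂ) ^ (k - j) = (-1) ^ (k - j) * Complex.I ^ (k - j) := by
      rw [neg_pow]
    have e2 : (-1 : ℂ) ^ (k - j) = (-1) ^ j := by
      have h3 : (-1 : ℂ) ^ (k - j) * (-1) ^ j = 1 := by
        rw [← pow_add, Nat.sub_add_cancel hj]
        exact Even.neg_one_pow ⟨m, hm⟩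
      have h4 : (-1 : ℂ) ^ j * (-1) ^ j = 1 := by
        rw [← pow_add]; exact Even.neg_one_pow ⟨j, rfl⟩
      calc (-1 : ℂ) ^ (k - j) = (-1) ^ (k-j) * ((-1)^j * (-1)^j) := by rw [h4, mul_one]
        _ = ((-1)^(k-j) * (-1)^j) * (-1)^j := by ring
        _ = (-1)^j := by rw [h3, one_mul]
    have e3 : Complex.I ^ j * Complex.I ^ (k - j) = (-1 : ℂ) ^ m := by
      rw [← pow_add, Nat.add_sub_cancel' hj, hm, ← two_mul, pow_mul, Complex.I_sq]
    rw [muE, e1, show Complex.I ^ j * ((-1:ℂ)^(k-j) * Complex.I^(k-j))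
        = (-1:ℂ)^(k-j) * (Complex.I^j * Complex.I^(k-j)) by ring, e2, e3, ← pow_add]
  have hmu_neg : ∀ j : Fin (k+1), ¬ (j:ℕ) % 2 = m % 2 → muE k (j:ℕ) = -1 := by
    intro j hj
    rw [hmu j (Fin.is_le j)]
    have h : ((j:ℕ) + m) % 2 = 1 := by omega
    rw [(Nat.odd_iff.mpr h).neg_one_pow]
  have hmu_pos : ∀ j : Fin (k+1), (j:ℕ) % 2 = m % 2 → muE k (j:ℕ) = 1 := by
    intro j hj
    rw [hmu j (Fin.is_le j)]
    have h : ((j:ℕ) + m) % 2 = 0 := by omega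
    rw [(Nat.even_iff.mpr h).neg_one_pow]
  set T : Finset (Fin (k+1)) := Finset.univ.filter (fun j => ¬ (j:ℕ) % 2 = m % 2) with hT
  have hU : Upsilon k
      = Submodule.span ℂ ((fun j : Fin (k+1) => vE k (j:ℕ)) '' (T : Set (Fin (k+1)))) := by
    apply le_antisymm
    · intro Ω hΩ
      obtain ⟨hΩ1, hΩ2⟩ := mem_Upsilon_iff.mp hΩ
      have h1 : Ω ∈ Submodule.span ℂ (Set.range fun j : Fin (k+1) => vE k (j:ℕ)) := by
        rw [span_vE]; exact hΩ1
      obtain ⟨c, hc⟩ := (Submodule.mem_span_range_iff_exists_fun ℂ).mp h1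
      have hzero : ∀ j : Fin (k+1), (muE k (j:ℕ) + 1) * c j = 0 := by
        have hP : (∑ j : Fin (k+1), ((muE k (j:ℕ) + 1) * c j) • vE k (j:ℕ)) = 0 := by
          apply Polynomial.eq_zero_of_infinite_isRoot
          apply Set.Infinite.mono (s := {z : ℂ | z ≠ -1/2})
          · intro z hz
            have hz' : z ≠ -1/2 := hz
            have hev := hΩ2 z hz'
            rw [← hc] at hev
            rw [eval_finset_sum, eval_finset_sum, Finset.sum_mul,
              ← Finset.sum_add_distrib] at hev
            simp only [Set.mem_setOf_eq, IsRoot.def]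
            rw [eval_finset_sum, ← hev]
            apply Finset.sum_congr rfl
            intro j _
            simp only [eval_smul, smul_eq_mul]
            linear_combination (-(c j)) * eval_vE k (j:ℕ) (Fin.is_le j) z hz'
          · apply Set.Infinite.mono (s := ({(-1/2 : ℂ)}ᶜ : Set ℂ))
            · intro z hz
              simpa using hz
            · exact (Set.finite_singleton ((-1/2 : ℂ))).infinite_compl
        exact Fintype.linearIndependent_iff.mp (indep_vE k) _ hP
      rw [← hc]
      apply Submodule.sum_mem
      intro j _
      by_cases hjT : j ∈ T
      · exact Submodule.smul_mem _ _ (Submodule.subset_span ⟨j, hjT, rfl⟩)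
      · have hj2 : (j:ℕ) % 2 = m % 2 := by
          by_contra h
          exact hjT (Finset.mem_filter.mpr ⟨Finset.mem_univ j, h⟩)
        have hcj : c j = 0 := by
          have h5 := hzero j
          rw [hmu_pos j hj2] at h5
          have h6 : (1 : ℂ) + 1 ≠ 0 := by norm_num
          exact (mul_eq_zero.mp h5).resolve_left h6
        rw [hcj, zero_smul]
        exact Submodule.zero_mem _
    · rw [Submodule.span_le]
      rintro _ ⟨j, hjT, rfl⟩
      have hj2 : ¬ (j:ℕ) % 2 = m % 2 := (Finset.mem_filter.mp hjT).2
      refine mem_Upsilon_iff.mpr ⟨vE_mem_degreeLT k j (Fin.is_le j), fun z hz => ?_⟩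
      rw [eval_vE k (j:ℕ) (Fin.is_le j) z hz, hmu_neg j hj2]
      ring
  rw [hU]
  have himg : (fun j : Fin (k+1) => vE k (j:ℕ)) '' (T : Set (Fin (k+1)))
      = Set.range (fun j : (T : Set (Fin (k+1))) => vE k ((j : Fin (k+1)) : ℕ)) := by
    rw [Set.image_eq_range]
  have hcard := finrank_span_eq_card (R := ℂ)
      (b := fun j : (T : Set (Fin (k+1))) => vE k ((j : Fin (k+1)) : ℕ))
      ((indep_vE k).comp _ Subtype.val_injective)
  rw [himg, hcard]
  have hTcard : Fintype.card (T : Set (Fin (k+1))) = T.card := by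
    simp
  rw [hTcard]
  have hTcard2 : T.card = ((Finset.range (k+1)).filter fun j => ¬ j % 2 = m % 2).card := by
    rw [hT, Finset.card_filter, Finset.card_filter]
    exact Fin.sum_univ_eq_sum_range (fun j => if ¬ j % 2 = m % 2 then 1 else 0) (k+1)
  rw [hTcard2, count_aux]
  split_ifs with h <;> omega
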